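/- Let u ∈ L¹_loc, and for x ∈ ℝⁿ and r > 0 define φ(x,r) = inf_{q∈ℝ} ( ⨍_{B(x,r)} |u − q|^{1/2} )². If q_{x,r} realizes the infimum (i.e. (⨍_{B(x,r)} |u − q_{x,r}|^{1/2})² = φ(x,r)), then for any 0 < κ ≤ 1/2 one has |q_{x,r} − q_{x,κr}| ≤ 2κ^{−2n} (φ(x,r) + φ(x,κr)). -/

import Mathlib

open MeasureTheory Set Metric

/-! For every `y`, `√|q - q'| ≤ √|u y - q| + √|u y - q'|` (`√` is subadditive). Averaging this over
the small ball `B(x, κr)` bounds `√|q_{x,r} - q_{x,κr}|` by two averages over `B(x, κr)`; the first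
one is at most `κ⁻ⁿ` times the same average over `B(x, r)`, since the integrand is nonnegative and
the two balls have volume ratio `κⁿ`. Squaring with `(s + t)² ≤ 2(s² + t²)` gives the bound. -/

lemma Real.sqrt_add_le_add_sqrt {x y : ℝ} (hx : 0 ≤ x) (hy : 0 ≤ y) : √(x + y) ≤ √x + √y := by
  rw [Real.sqrt_le_left (by positivity), add_sq, Real.sq_sqrt hx, Real.sq_sqrt hy]
  nlinarith [Real.sqrt_nonneg x, Real.sqrt_nonneg y]

lemma Real.sqrt_abs_sub_le (a b c : ℝ) : √|a - b| ≤ √|c - a| + √|c - b| :=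
  calc √|a - b| ≤ √(|c - a| + |c - b|) := by
        gcongr; exact (abs_sub_le a c b).trans_eq (by rw [abs_sub_comm a c])
    _ ≤ √|c - a| + √|c - b| := Real.sqrt_add_le_add_sqrt (abs_nonneg _) (abs_nonneg _)

lemma Real.sqrt_le_one_add {x : ℝ} (hx : 0 ≤ x) : √x ≤ 1 + x := by
  nlinarith [Real.sq_sqrt hx, Real.sqrt_nonneg x, sq_nonneg (√x - 1)]

section Averages

variable {α : Type*} [MeasurableSpace α] {μ : Measure α} {s t : Set α}

lemma MeasureTheory.IntegrableOn.sqrt_abs {g : α → ℝ} (hg : IntegrableOn g s μ) (hs : μ s ≠ ⊤) :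
    IntegrableOn (fun y => √|g y|) s μ := by
  refine ((integrableOn_const (C := (1 : ℝ)) hs).add hg.abs).mono'
    ((Real.continuous_sqrt.comp continuous_abs).comp_aestronglyMeasurable
      hg.aestronglyMeasurable) (ae_of_all _ fun y => ?_)
  rw [Real.norm_of_nonneg (Real.sqrt_nonneg _)]
  exact Real.sqrt_le_one_add (abs_nonneg _)

lemma MeasureTheory.setAverage_nonneg {f : α → ℝ} (hf : 0 ≤ f) : 0 ≤ ⨍ y in s, f y ∂μ := by
  rw [setAverage_eq]
  exact smul_nonneg (inv_nonneg.2 measureReal_nonneg) (integral_nonneg hf)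

lemma MeasureTheory.setAverage_add {f g : α → ℝ} (hf : IntegrableOn f s μ)
    (hg : IntegrableOn g s μ) :
    ⨍ y in s, (f y + g y) ∂μ = (⨍ y in s, f y ∂μ) + ⨍ y in s, g y ∂μ := by
  simp only [setAverage_eq, integral_add hf hg, smul_add]

lemma MeasureTheory.setAverage_mono {f g : α → ℝ} (hf : IntegrableOn f s μ)
    (hg : IntegrableOn g s μ) (hfg : f ≤ g) :
    ⨍ y in s, f y ∂μ ≤ ⨍ y in s, g y ∂μ := by
  simp only [setAverage_eq]
  exact smul_le_smul_of_nonneg_left (integral_mono hf hg hfg) (inv_nonneg.2 measureReal_nonneg)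

lemma MeasureTheory.sqrt_abs_sub_le_setAverage (hs₀ : μ s ≠ 0) (hs : μ s ≠ ⊤)
    {f : α → ℝ} {a b : ℝ}
    (ha : IntegrableOn (fun y => √|f y - a|) s μ) (hb : IntegrableOn (fun y => √|f y - b|) s μ) :
    √|a - b| ≤ (⨍ y in s, √|f y - a| ∂μ) + ⨍ y in s, √|f y - b| ∂μ := by
  rw [← setAverage_add ha hb, ← setAverage_const hs₀ hs √|a - b|]
  exact setAverage_mono (integrableOn_const hs) (ha.add hb) fun y =>
    Real.sqrt_abs_sub_le a b (f y)

lemma MeasureTheory.measureReal_mul_setAverage_le_of_subset (hts : t ⊆ s) (hs : μ s ≠ ⊤)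
    {f : α → ℝ} (hf₀ : 0 ≤ᵐ[μ.restrict s] f) (hf : IntegrableOn f s μ) :
    μ.real t * ⨍ y in t, f y ∂μ ≤ μ.real s * ⨍ y in s, f y ∂μ := by
  simp only [← smul_eq_mul, measure_smul_setAverage _ hs,
    measure_smul_setAverage _ (measure_ne_top_of_subset hts hs)]
  exact setIntegral_mono_set hf hf₀ hts.eventuallyLE

end Averages

section Balls

variable {E : Type*} [NormedAddCommGroup E] [NormedSpace ℝ E] [MeasurableSpace E] [BorelSpace E]
  [FiniteDimensional ℝ E] (μ : Measure E) [μ.IsAddHaarMeasure]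

lemma MeasureTheory.Measure.addHaar_real_ball_mul (x : E) {κ : ℝ} (hκ : 0 < κ) (r : ℝ) :
    μ.real (ball x (κ * r)) = κ ^ Module.finrank ℝ E * μ.real (ball x r) := by
  simp only [measureReal_def, Measure.addHaar_ball_mul_of_pos μ x hκ, addHaar_ball_center μ x r,
    ENNReal.toReal_mul, ENNReal.toReal_ofReal (pow_nonneg hκ.le _)]

lemma MeasureTheory.setAverage_ball_mul_le (x : E) {r κ : ℝ} (hr : 0 < r) (hκ : 0 < κ)
    (hκ₁ : κ ≤ 1) {f : E → ℝ} (hf₀ : 0 ≤ᵐ[μ.restrict (ball x r)] f)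
    (hf : IntegrableOn f (ball x r) μ) :
    ⨍ y in ball x (κ * r), f y ∂μ ≤ (κ ^ Module.finrank ℝ E)⁻¹ * ⨍ y in ball x r, f y ∂μ := by
  have hball : ball x (κ * r) ⊆ ball x r := ball_subset_ball (mul_le_of_le_one_left hr.le hκ₁)
  have hμ : 0 < μ.real (ball x r) :=
    ENNReal.toReal_pos (measure_ball_pos μ x hr).ne' measure_ball_lt_top.ne
  have := measureReal_mul_setAverage_le_of_subset hball measure_ball_lt_top.ne hf₀ hf
  rw [μ.addHaar_real_ball_mul x hκ, mul_comm _ (μ.real _), mul_assoc] at this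
  rw [le_inv_mul_iff₀ (by positivity)]
  exact le_of_mul_le_mul_left this hμ

end Balls

theorem stmt_9_general (n : ℕ) (u : EuclideanSpace ℝ (Fin n) → ℝ)
    (hu : LocallyIntegrable u volume)
    (x : EuclideanSpace ℝ (Fin n)) (r κ : ℝ) (hr : 0 < r)
    (hκ : 0 < κ) (hκ' : κ ≤ 1 / 2)
    (qr qκr : ℝ)
    (hqr : (⨍ y in ball x r, Real.sqrt |u y - qr|) ^ 2
      = ⨅ q : ℝ, (⨍ y in ball x r, Real.sqrt |u y - q|) ^ 2)
    (hqκr : (⨍ y in ball x (κ * r), Real.sqrt |u y - qκr|) ^ 2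
      = ⨅ q : ℝ, (⨍ y in ball x (κ * r), Real.sqrt |u y - q|) ^ 2) :
    |qr - qκr| ≤ 2 * κ ^ (-(2 * (n:ℤ))) *
      ((⨅ q : ℝ, (⨍ y in ball x r, Real.sqrt |u y - q|) ^ 2)
        + ⨅ q : ℝ, (⨍ y in ball x (κ * r), Real.sqrt |u y - q|) ^ 2) := by
  rw [← hqr, ← hqκr]
  have hκ₁ : κ ≤ 1 := by linarith
  have hint : ∀ q, IntegrableOn (fun y => √|u y - q|) (ball x r) volume := fun q =>
    ((hu.integrableOn_isCompact (isCompact_closedBall x r)).mono_set ball_subset_closedBall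
      |>.sub (integrableOn_const measure_ball_lt_top.ne)).sqrt_abs measure_ball_lt_top.ne
  have hsub : ball x (κ * r) ⊆ ball x r := ball_subset_ball (mul_le_of_le_one_left hr.le hκ₁)
  set a := ⨍ y in ball x r, √|u y - qr|
  set A := ⨍ y in ball x (κ * r), √|u y - qr|
  set B := ⨍ y in ball x (κ * r), √|u y - qκr|
  set c := (κ ^ n)⁻¹
  have hAB : √|qr - qκr| ≤ A + B :=
    sqrt_abs_sub_le_setAverage (measure_ball_pos _ x (mul_pos hκ hr)).ne' measure_ball_lt_top.ne
      ((hint qr).mono_set hsub) ((hint qκr).mono_set hsub)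
  have hAa : A ≤ c * a := by
    simpa [c, finrank_euclideanSpace_fin] using setAverage_ball_mul_le volume x hr hκ hκ₁
      (ae_of_all _ fun y => Real.sqrt_nonneg _) (hint qr)
  have hA : 0 ≤ A := setAverage_nonneg fun y => Real.sqrt_nonneg _
  have ha : 0 ≤ a := setAverage_nonneg fun y => Real.sqrt_nonneg _
  have hc : 1 ≤ c := one_le_inv₀ (pow_pos hκ n) |>.2 (pow_le_one₀ hκ.le hκ₁)
  have hκc : κ ^ (-(2 * (n : ℤ))) = c ^ 2 := by
    rw [mul_comm, zpow_neg, zpow_mul, zpow_natCast, inv_pow]; norm_cast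
  calc |qr - qκr| = √|qr - qκr| ^ 2 := (Real.sq_sqrt (abs_nonneg _)).symm
    _ ≤ (A + B) ^ 2 := by gcongr
    _ ≤ 2 * (c ^ 2 * a ^ 2 + c ^ 2 * B ^ 2) := by
      nlinarith [sq_nonneg (A - B), mul_le_mul hAa hAa hA (by positivity),
        mul_le_mul_of_nonneg_right (one_le_pow₀ hc : 1 ≤ c ^ 2) (sq_nonneg B)]
    _ = 2 * κ ^ (-(2 * (n : ℤ))) * (a ^ 2 + B ^ 2) := by rw [hκc]; ring

/-- Comparison of minimizing constants at two scales:
|q_{x,r} − q_{x,κr}| ≤ 2 κ^{−2n} (φ(x,r) + φ(x,κr)). -/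
theorem stmt_9 (n : ℕ) (hn : 1 ≤ n) (u : EuclideanSpace ℝ (Fin n) → ℝ)
    (hu : LocallyIntegrable u volume)
    (x : EuclideanSpace ℝ (Fin n)) (r κ : ℝ) (hr : 0 < r)
    (hκ : 0 < κ) (hκ' : κ ≤ 1 / 2)
    (qr qκr : ℝ)
    (hqr : (⨍ y in ball x r, Real.sqrt |u y - qr|) ^ 2
      = ⨅ q : ℝ, (⨍ y in ball x r, Real.sqrt |u y - q|) ^ 2)
    (hqκr : (⨍ y in ball x (κ * r), Real.sqrt |u y - qκr|) ^ 2
      = ⨅ q : ℝ, (⨍ y in ball x (κ * r), Real.sqrt |u y - q|) ^ 2) :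
    |qr - qκr| ≤ 2 * κ ^ (-(2 * (n:ℤ))) *
      ((⨅ q : ℝ, (⨍ y in ball x r, Real.sqrt |u y - q|) ^ 2)
        + ⨅ q : ℝ, (⨍ y in ball x (κ * r), Real.sqrt |u y - q|) ^ 2) :=
  stmt_9_general n u hu x r κ hr hκ hκ' qr qκr hqr hqκr
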